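/- Let X be an (nT)×(MT) matrix, β*, β̂ ∈ ℝ^{MT}, W ∈ ℝ^{nT}, y = Xβ* + W, and λ > 0. Suppose β̂ minimizes (1/(nT))‖Xβ − y‖² + 2λ‖β‖_{2,1} and suppose (1/(nT))‖XᵀW‖_{2,∞} ≤ λ/2. Then for every β ∈ ℝ^{MT}: (1/(nT))‖X(β̂ − β*)‖² + λ‖β̂ − β‖_{2,1} ≤ (1/(nT))‖X(β − β*)‖² + 4λ Σ_{j ∈ J(β)} ‖β̂^j − β^j‖, where J(β) = {j : β^j ≠ 0}. -/

import Mathlib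

open scoped BigOperators Classical
open Matrix

noncomputable def blk {M T : ℕ} (β : Fin M × Fin T → ℝ) (j : Fin M) :
    EuclideanSpace ℝ (Fin T) := WithLp.toLp 2 (fun t => β (j, t))

noncomputable def norm21 {M T : ℕ} (β : Fin M × Fin T → ℝ) : ℝ := ∑ j, ‖blk β j‖

noncomputable def norm2inf {M T : ℕ} (β : Fin M × Fin T → ℝ) : ℝ :=
  ‖(fun j => ‖blk β j‖ : Fin M → ℝ)‖


/-! Compare the objective at `βhat` and at `β`: after expanding `y = X β* + W`, the noise enters
only through the cross term `⟨W, X (βhat - β)⟩`, which the duality of the `(2,1)` and `(2,∞)`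
block norms bounds by `(λ/2) ‖βhat - β‖_{2,1}`. The penalty difference
`‖βhat - β‖_{2,1} + ‖β‖_{2,1} - ‖βhat‖_{2,1}` vanishes on the blocks where `β^j = 0` and, by the
triangle inequality, is at most `2 ‖βhat^j - β^j‖` on the others. -/

lemma sum_sq_sub_add_sub_sum_sq_sub_add {ι : Type*} [Fintype ι] (a a' b w : ι → ℝ) :
    ∑ i, (a i - (b i + w i)) ^ 2 - ∑ i, (a' i - (b i + w i)) ^ 2 =
      ∑ i, (a i - b i) ^ 2 - ∑ i, (a' i - b i) ^ 2 - 2 * (w ⬝ᵥ (a - a')) := by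
  simp only [dotProduct, Pi.sub_apply, Finset.mul_sum, ← Finset.sum_sub_distrib]
  exact Finset.sum_congr rfl fun i _ => by ring

lemma sum_norm_sub_add_norm_sub_norm_le {ι E : Type*} [SeminormedAddCommGroup E] [DecidableEq E]
    (s : Finset ι) (a b : ι → E) :
    ∑ i ∈ s, (‖a i - b i‖ + ‖b i‖ - ‖a i‖) ≤ 2 * ∑ i ∈ s with b i ≠ 0, ‖a i - b i‖ := by
  rw [← Finset.sum_filter_add_sum_filter_not s (fun i => b i ≠ 0), Finset.mul_sum]
  have hzero : ∑ i ∈ s with ¬b i ≠ 0, (‖a i - b i‖ + ‖b i‖ - ‖a i‖) = 0 :=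
    Finset.sum_eq_zero fun i hi => by simp [not_not.1 (Finset.mem_filter.1 hi).2]
  rw [hzero, add_zero]
  refine Finset.sum_le_sum fun i _ => ?_
  have := norm_sub_norm_le (b i) (a i)
  rw [norm_sub_rev] at this
  linarith

section BlockNorms

variable {M T : ℕ}

lemma blk_sub (a b : Fin M × Fin T → ℝ) (j : Fin M) : blk (a - b) j = blk a j - blk b j := rfl

lemma norm_blk_le_norm2inf (u : Fin M × Fin T → ℝ) (j : Fin M) : ‖blk u j‖ ≤ norm2inf u := by
  simpa only [norm2inf, Real.norm_of_nonneg (norm_nonneg (blk u j))] using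
    norm_le_pi_norm (fun j => ‖blk u j‖ : Fin M → ℝ) j

lemma norm2inf_nonneg (u : Fin M × Fin T → ℝ) : 0 ≤ norm2inf u := norm_nonneg _

lemma norm21_nonneg (u : Fin M × Fin T → ℝ) : 0 ≤ norm21 u :=
  Finset.sum_nonneg fun _ _ => norm_nonneg _

lemma dotProduct_eq_sum_inner_blk (u v : Fin M × Fin T → ℝ) :
    u ⬝ᵥ v = ∑ j, inner ℝ (blk u j) (blk v j) := by
  simp only [dotProduct, Fintype.sum_prod_type, PiLp.inner_apply, blk, RCLike.inner_apply,
    conj_trivial]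
  exact Finset.sum_congr rfl fun j _ => Finset.sum_congr rfl fun t _ => mul_comm _ _

lemma dotProduct_le_norm2inf_mul_norm21 (u v : Fin M × Fin T → ℝ) :
    u ⬝ᵥ v ≤ norm2inf u * norm21 v := by
  rw [dotProduct_eq_sum_inner_blk, norm21, Finset.mul_sum]
  exact Finset.sum_le_sum fun j _ => (real_inner_le_norm _ _).trans <|
    mul_le_mul_of_nonneg_right (norm_blk_le_norm2inf u j) (norm_nonneg _)

lemma dotProduct_mulVec_le {m : Type*} [Fintype m] (X : Matrix m (Fin M × Fin T) ℝ)
    (w : m → ℝ) (v : Fin M × Fin T → ℝ) :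
    w ⬝ᵥ X *ᵥ v ≤ norm2inf (Xᵀ *ᵥ w) * norm21 v := by
  rw [dotProduct_mulVec, ← mulVec_transpose]
  exact dotProduct_le_norm2inf_mul_norm21 _ _

lemma norm21_sub_add_sub_le (a b : Fin M × Fin T → ℝ) :
    norm21 (a - b) + norm21 b - norm21 a ≤
      2 * ∑ j ∈ Finset.univ.filter (fun j => blk b j ≠ 0), ‖blk a j - blk b j‖ := by
  simpa only [norm21, blk_sub, Finset.sum_add_distrib, Finset.sum_sub_distrib] using
    sum_norm_sub_add_norm_sub_norm_le Finset.univ (blk a) (blk b)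

end BlockNorms

theorem stmt_10_general (n T M : ℕ)
    (X : Matrix (Fin (n * T)) (Fin M × Fin T) ℝ)
    (βstar βhat : Fin M × Fin T → ℝ) (W : Fin (n * T) → ℝ)
    (y : Fin (n * T) → ℝ) (hy : y = X.mulVec βstar + W)
    (lam : ℝ)
    (hmin : ∀ β : Fin M × Fin T → ℝ,
        (1 / (n * T : ℝ)) * ∑ i, (X.mulVec βhat i - y i) ^ 2 +
          2 * lam * norm21 βhat ≤
        (1 / (n * T : ℝ)) * ∑ i, (X.mulVec β i - y i) ^ 2 + 2 * lam * norm21 β)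
    (hW : (1 / (n * T : ℝ)) * norm2inf (Xᵀ.mulVec W) ≤ lam / 2) :
    ∀ β : Fin M × Fin T → ℝ,
      (1 / (n * T : ℝ)) * ∑ i, (X.mulVec βhat i - X.mulVec βstar i) ^ 2 +
          lam * norm21 (βhat - β) ≤
        (1 / (n * T : ℝ)) * ∑ i, (X.mulVec β i - X.mulVec βstar i) ^ 2 +
          4 * lam * ∑ j ∈ Finset.univ.filter (fun j => blk β j ≠ 0),
            ‖blk βhat j - blk β j‖ := by
  intro β
  subst hy
  set c : ℝ := 1 / (n * T : ℝ)
  have hc : 0 ≤ c := by positivity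
  have hlam : 0 ≤ lam := by
    have := mul_nonneg hc (norm2inf_nonneg (Xᵀ *ᵥ W))
    linarith
  have hbasic := hmin β
  simp only [Pi.add_apply] at hbasic
  have hloss := sum_sq_sub_add_sub_sum_sq_sub_add (X *ᵥ βhat) (X *ᵥ β) (X *ᵥ βstar) W
  rw [← mulVec_sub] at hloss
  have hcross : 2 * c * (W ⬝ᵥ X *ᵥ (βhat - β)) ≤ lam * norm21 (βhat - β) :=
    calc 2 * c * (W ⬝ᵥ X *ᵥ (βhat - β))
        ≤ 2 * c * (norm2inf (Xᵀ *ᵥ W) * norm21 (βhat - β)) := by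
          gcongr
          exact dotProduct_mulVec_le X W _
      _ = 2 * (c * norm2inf (Xᵀ *ᵥ W)) * norm21 (βhat - β) := by ring
      _ ≤ 2 * (lam / 2) * norm21 (βhat - β) := by
          gcongr
          exact norm21_nonneg _
      _ = lam * norm21 (βhat - β) := by ring
  have hpen := mul_le_mul_of_nonneg_left (norm21_sub_add_sub_le βhat β) (mul_nonneg two_pos.le hlam)
  linear_combination hbasic + hcross + hpen - c * hloss

theorem stmt_10 (n T M : ℕ) (hn : 0 < n) (hT : 0 < T)
    (X : Matrix (Fin (n * T)) (Fin M × Fin T) ℝ)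
    (βstar βhat : Fin M × Fin T → ℝ) (W : Fin (n * T) → ℝ)
    (y : Fin (n * T) → ℝ) (hy : y = X.mulVec βstar + W)
    (lam : ℝ) (hlam : 0 < lam)
    (hmin : ∀ β : Fin M × Fin T → ℝ,
        (1 / (n * T : ℝ)) * ∑ i, (X.mulVec βhat i - y i) ^ 2 +
          2 * lam * norm21 βhat ≤
        (1 / (n * T : ℝ)) * ∑ i, (X.mulVec β i - y i) ^ 2 + 2 * lam * norm21 β)
    (hW : (1 / (n * T : ℝ)) * norm2inf (Xᵀ.mulVec W) ≤ lam / 2) :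
    ∀ β : Fin M × Fin T → ℝ,
      (1 / (n * T : ℝ)) * ∑ i, (X.mulVec βhat i - X.mulVec βstar i) ^ 2 +
          lam * norm21 (βhat - β) ≤
        (1 / (n * T : ℝ)) * ∑ i, (X.mulVec β i - X.mulVec βstar i) ^ 2 +
          4 * lam * ∑ j ∈ Finset.univ.filter (fun j => blk β j ≠ 0),
            ‖blk βhat j - blk β j‖ :=
  stmt_10_general n T M X βstar βhat W y hy lam hmin hW
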